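/- Let M₁ ≤ M₂ be real numbers, let f : ℝ → [M₁, M₂] be nondecreasing, and let X and Y be real-valued random variables with cumulative distribution functions F_X and F_Y. Then for every δ ≥ 0: E[f(X)] ≥ E[f(Y − δ)] − (M₂ − M₁)·L_δ(F_X, F_Y) and E[f(X)] ≤ E[f(Y + δ)] + (M₂ − M₁)·L_δ(F_X, F_Y). If in addition f is Lipschitz continuous with constant C, then |E[f(X)] − E[f(Y)]| ≤ C·δ + (M₂ − M₁)·L_δ(F_X, F_Y). -/

import Mathlib

open Filter MeasureTheory Set

/-- A cumulative distribution function on ℝ: nondecreasing, right-continuous,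
with limit 0 at -∞ and 1 at +∞. -/
def IsCDF (F : ℝ → ℝ) : Prop :=
  Monotone F ∧ (∀ t : ℝ, ContinuousWithinAt F (Set.Ici t) t) ∧
    Tendsto F atBot (nhds 0) ∧ Tendsto F atTop (nhds 1)

/-- The Lévy gauge with tolerance `δ` between two cdfs. -/
noncomputable def levyGauge (δ : ℝ) (F G : ℝ → ℝ) : ℝ :=
  sInf {ε : ℝ | 0 ≤ ε ∧ ∀ t : ℝ, F (t - δ) - ε ≤ G t ∧ G t ≤ F (t + δ) + ε}

/-- The cumulative distribution function of a real random variable `X` under `P`. -/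
noncomputable def rvCdf {Ω : Type*} [MeasurableSpace Ω] (P : MeasureTheory.Measure Ω)
    (X : Ω → ℝ) (t : ℝ) : ℝ :=
  (P {ω | X ω ≤ t}).toReal

/-!
By the layer-cake formula, `E f(X) - M₁ = ∫₀^{M₂-M₁} P(f(X) - M₁ > t) dt`, and every level set
`{f > s}` of a nondecreasing `f` is an upper set of `ℝ`, hence a ray `Ioi a` or `Ici a` (or `∅`,
`ℝ`). The Lévy gauge bound `F_Y(t) ≤ F_X(t + δ) + L` says that `X` lands in any such ray with
probability at most `L` more than `Y + δ` does (for closed rays after a limit from the left), and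
integrating over `t ∈ (0, M₂ - M₁]` costs at most `(M₂ - M₁) L`. The symmetric bound compares
`Y - δ` with `X`. For Lipschitz `f`, shifting `Y` by `±δ` moves `E f(Y)` by at most `C δ`.
-/

open Topology

theorem IsUpperSet.eq_Ici_or_eq_Ioi {α : Type*} [ConditionallyCompleteLinearOrder α]
    {s : Set α} (hs : IsUpperSet s) (hne : s.Nonempty) (hbdd : BddBelow s) :
    s = Ici (sInf s) ∨ s = Ioi (sInf s) := by
  have hglb := isGLB_csInf hne hbdd
  have hunion : ⋃ x ∈ s, Ici x = s :=
    Subset.antisymm (iUnion₂_subset fun _ hx _ hxy ↦ hs hxy hx)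
      fun x hx ↦ mem_biUnion hx le_rfl
  by_cases hmem : sInf s ∈ s
  · exact .inl (by rw [← hglb.biUnion_Ici_eq_Ici hmem, hunion])
  · exact .inr (by rw [← hglb.biUnion_Ici_eq_Ioi hmem, hunion])

theorem IsUpperSet.eq_univ_of_not_bddBelow {α : Type*} [LinearOrder α] {s : Set α}
    (hs : IsUpperSet s) (hbdd : ¬BddBelow s) : s = univ := by
  refine eq_univ_of_forall fun x ↦ ?_
  obtain ⟨y, hy, hyx⟩ := not_bddBelow_iff.1 hbdd x
  exact hs hyx.le hy

namespace MeasureTheory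

section CdfComparison

variable {μ ν : Measure ℝ} {ε : ℝ}

theorem measureReal_Iio_le_of_forall_measureReal_Iic_le [IsFiniteMeasure μ] [IsFiniteMeasure ν]
    (h : ∀ t, ν.real (Iic t) ≤ μ.real (Iic t) + ε) (a : ℝ) :
    ν.real (Iio a) ≤ μ.real (Iio a) + ε := by
  obtain ⟨u, hu_mono, hu_lt, hu_lim⟩ := exists_seq_strictMono_tendsto a
  have hlim : Tendsto (fun n ↦ ν.real (Iic (u n))) atTop (𝓝 (ν.real (Iio a))) := by
    rw [← iUnion_Iic_eq_Iio_of_lt_of_tendsto hu_lt hu_lim]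
    exact (ENNReal.tendsto_toReal (measure_ne_top ν _)).comp
      (tendsto_measure_iUnion_atTop (monotone_Iic.comp hu_mono.monotone))
  exact le_of_tendsto' hlim fun n ↦
    (h (u n)).trans (add_le_add_left (measureReal_mono (μ := μ) (Iic_subset_Iio.2 (hu_lt n))) ε)

theorem measureReal_le_of_isUpperSet_of_forall_measureReal_Iic_le
    [IsProbabilityMeasure μ] [IsProbabilityMeasure ν] (hε : 0 ≤ ε)
    (h : ∀ t, ν.real (Iic t) ≤ μ.real (Iic t) + ε) {A : Set ℝ} (hA : IsUpperSet A) :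
    μ.real A ≤ ν.real A + ε := by
  rcases A.eq_empty_or_nonempty with rfl | hne
  · simpa using hε
  by_cases hbdd : BddBelow A
  · rcases hA.eq_Ici_or_eq_Ioi hne hbdd with hA | hA <;> rw [hA]
    · rw [← compl_Iio, probReal_compl_eq_one_sub measurableSet_Iio,
        probReal_compl_eq_one_sub measurableSet_Iio]
      linarith [measureReal_Iio_le_of_forall_measureReal_Iic_le h (sInf A)]
    · rw [← compl_Iic, probReal_compl_eq_one_sub measurableSet_Iic,
        probReal_compl_eq_one_sub measurableSet_Iic]
      linarith [h (sInf A)]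
  · simpa [hA.eq_univ_of_not_bddBelow hbdd] using hε

end CdfComparison

section LayerCake

variable {α : Type*} [MeasurableSpace α] {ρ μ ν : Measure α} {g : α → ℝ} {B : ℝ}

theorem integral_eq_setIntegral_Ioc_measureReal_lt [IsFiniteMeasure ρ] (hg : Measurable g)
    (hg0 : ∀ x, 0 ≤ g x) (hgB : ∀ x, g x ≤ B) :
    ∫ x, g x ∂ρ = ∫ t in Ioc 0 B, ρ.real {x | t < g x} := by
  have hint : Integrable g ρ :=
    .of_mem_Icc 0 B hg.aemeasurable (ae_of_all _ fun x ↦ ⟨hg0 x, hgB x⟩)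
  rw [hint.integral_eq_integral_meas_lt (ae_of_all _ hg0)]
  refine setIntegral_eq_of_subset_of_forall_sdiff_eq_zero measurableSet_Ioi
    Ioc_subset_Ioi_self fun t ht ↦ ?_
  have hBt : B < t := lt_of_not_ge fun h ↦ ht.2 ⟨ht.1, h⟩
  simp [fun x ↦ (hgB x).trans_lt hBt |>.not_gt]

theorem integrableOn_measureReal_lt [IsFiniteMeasure ρ] (g : α → ℝ) {s : Set ℝ}
    (hs : volume s ≠ ⊤) : IntegrableOn (fun t ↦ ρ.real {x | t < g x}) s := by
  have hanti : Antitone fun t ↦ ρ.real {x | t < g x} := fun s t hst ↦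
    measureReal_mono fun x hx ↦ hst.trans_lt hx
  refine Measure.integrableOn_of_bounded hs hanti.measurable.aestronglyMeasurable
    (M := ρ.real univ) (ae_of_all _ fun t ↦ ?_)
  rw [Real.norm_of_nonneg measureReal_nonneg]
  exact measureReal_mono (subset_univ _)

theorem integral_le_integral_add_mul_of_forall_measureReal_lt_le [IsFiniteMeasure μ]
    [IsFiniteMeasure ν] {ε : ℝ} (hg : Measurable g) (hg0 : ∀ x, 0 ≤ g x)
    (hgB : ∀ x, g x ≤ B) (hB : 0 ≤ B)
    (h : ∀ t, μ.real {x | t < g x} ≤ ν.real {x | t < g x} + ε) :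
    ∫ x, g x ∂μ ≤ ∫ x, g x ∂ν + B * ε := by
  have hvol : volume (Ioc (0 : ℝ) B) ≠ ⊤ := measure_Ioc_lt_top.ne
  rw [integral_eq_setIntegral_Ioc_measureReal_lt hg hg0 hgB,
    integral_eq_setIntegral_Ioc_measureReal_lt hg hg0 hgB]
  calc ∫ t in Ioc 0 B, μ.real {x | t < g x}
      ≤ ∫ t in Ioc 0 B, (ν.real {x | t < g x} + ε) :=
        setIntegral_mono (integrableOn_measureReal_lt g hvol)
          ((integrableOn_measureReal_lt g hvol).add (integrableOn_const hvol)) h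
    _ = (∫ t in Ioc 0 B, ν.real {x | t < g x}) + B * ε := by
        rw [integral_add (integrableOn_measureReal_lt g hvol) (integrableOn_const hvol),
          setIntegral_const, Real.volume_real_Ioc, sub_zero, max_eq_left hB, smul_eq_mul]

end LayerCake

theorem integral_le_integral_add_of_forall_measureReal_Iic_le {μ ν : Measure ℝ}
    [IsProbabilityMeasure μ] [IsProbabilityMeasure ν] {ε M₁ M₂ : ℝ} (hε : 0 ≤ ε)
    (h : ∀ t, ν.real (Iic t) ≤ μ.real (Iic t) + ε) {f : ℝ → ℝ} (hf : Monotone f)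
    (hrange : ∀ x, f x ∈ Icc M₁ M₂) :
    ∫ x, f x ∂μ ≤ ∫ x, f x ∂ν + (M₂ - M₁) * ε := by
  have hint (ρ : Measure ℝ) [IsFiniteMeasure ρ] : Integrable f ρ :=
    .of_mem_Icc M₁ M₂ hf.measurable.aemeasurable (ae_of_all _ hrange)
  have hupper (t : ℝ) : IsUpperSet {x | t < f x - M₁} := fun _ _ hxy hx ↦
    hx.trans_le (sub_le_sub_right (hf hxy) M₁)
  have key := integral_le_integral_add_mul_of_forall_measureReal_lt_le (μ := μ) (ν := ν)
    (hf.measurable.sub_const M₁) (fun x ↦ sub_nonneg.2 (hrange x).1)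
    (fun x ↦ sub_le_sub_right (hrange x).2 M₁) (sub_nonneg.2 ((hrange 0).1.trans (hrange 0).2))
    fun t ↦ measureReal_le_of_isUpperSet_of_forall_measureReal_Iic_le hε h (hupper t)
  simp only [integral_sub (hint μ) (integrable_const M₁),
    integral_sub (hint ν) (integrable_const M₁), integral_const, probReal_univ, one_smul] at key
  linarith

theorem integral_comp_le_integral_comp_add_of_forall_rvCdf_le {Ω₁ Ω₂ : Type*}
    [MeasurableSpace Ω₁] [MeasurableSpace Ω₂] {P₁ : Measure Ω₁} {P₂ : Measure Ω₂}
    [IsProbabilityMeasure P₁] [IsProbabilityMeasure P₂] {X : Ω₁ → ℝ} {Y : Ω₂ → ℝ}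
    (hX : Measurable X) (hY : Measurable Y) {ε M₁ M₂ : ℝ} (hε : 0 ≤ ε)
    (h : ∀ t, rvCdf P₂ Y t ≤ rvCdf P₁ X t + ε) {f : ℝ → ℝ} (hf : Monotone f)
    (hrange : ∀ x, f x ∈ Icc M₁ M₂) :
    ∫ ω, f (X ω) ∂P₁ ≤ ∫ ω, f (Y ω) ∂P₂ + (M₂ - M₁) * ε := by
  have := Measure.isProbabilityMeasure_map (μ := P₁) hX.aemeasurable
  have := Measure.isProbabilityMeasure_map (μ := P₂) hY.aemeasurable
  rw [← integral_map hX.aemeasurable hf.measurable.aestronglyMeasurable,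
    ← integral_map hY.aemeasurable hf.measurable.aestronglyMeasurable]
  refine integral_le_integral_add_of_forall_measureReal_Iic_le hε (fun t ↦ ?_) hf hrange
  rw [map_measureReal_apply hX measurableSet_Iic, map_measureReal_apply hY measurableSet_Iic]
  exact h t

theorem abs_integral_comp_add_sub_integral_comp_le {Ω : Type*} [MeasurableSpace Ω]
    {P : Measure Ω} [IsProbabilityMeasure P] {f : ℝ → ℝ} {C : NNReal} (hf : LipschitzWith C f)
    {Y : Ω → ℝ} (hY : Measurable Y) (hint : Integrable (fun ω ↦ f (Y ω)) P) (c : ℝ) :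
    |∫ ω, f (Y ω + c) ∂P - ∫ ω, f (Y ω) ∂P| ≤ C * |c| := by
  have hdiff (ω : Ω) : ‖f (Y ω + c) - f (Y ω)‖ ≤ C * |c| := by
    simpa [Real.dist_eq] using hf.dist_le_mul (Y ω + c) (Y ω)
  have hint_diff : Integrable (fun ω ↦ f (Y ω + c) - f (Y ω)) P :=
    .of_bound ((hf.continuous.measurable.comp (hY.add_const c)).sub
      (hf.continuous.measurable.comp hY)).aestronglyMeasurable _ (ae_of_all _ hdiff)
  rw [← integral_sub ((hint_diff.add hint).congr (ae_of_all _ fun ω ↦ sub_add_cancel _ _)) hint]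
  simpa using norm_integral_le_of_norm_le_const (μ := P) (ae_of_all _ hdiff)

end MeasureTheory

theorem levyGauge_spec {δ : ℝ} {F G : ℝ → ℝ}
    (hne : ∃ ε, 0 ≤ ε ∧ ∀ t, F (t - δ) - ε ≤ G t ∧ G t ≤ F (t + δ) + ε) :
    0 ≤ levyGauge δ F G ∧
      ∀ t, F (t - δ) - levyGauge δ F G ≤ G t ∧ G t ≤ F (t + δ) + levyGauge δ F G := by
  refine IsClosed.csInf_mem ?_ hne ⟨0, fun _ hε ↦ hε.1⟩
  change IsClosed {ε : ℝ | 0 ≤ ε ∧ ∀ t, F (t - δ) - ε ≤ G t ∧ G t ≤ F (t + δ) + ε}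
  simp only [ofPred_and, ofPred_forall]
  exact (isClosed_le continuous_const continuous_id).inter <| isClosed_iInter fun t ↦
    (isClosed_le (by fun_prop) continuous_const).inter (isClosed_le continuous_const (by fun_prop))

theorem levyGauge_spec_of_mem_Icc {δ : ℝ} {F G : ℝ → ℝ} (hF : ∀ t, F t ∈ Icc 0 1)
    (hG : ∀ t, G t ∈ Icc 0 1) :
    0 ≤ levyGauge δ F G ∧
      ∀ t, F (t - δ) - levyGauge δ F G ≤ G t ∧ G t ≤ F (t + δ) + levyGauge δ F G :=
  levyGauge_spec ⟨1, zero_le_one, fun t ↦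
    ⟨by linarith [(hF (t - δ)).2, (hG t).1], by linarith [(hG t).2, (hF (t + δ)).1]⟩⟩

section rvCdf

variable {Ω : Type*} [MeasurableSpace Ω] (P : Measure Ω) (X : Ω → ℝ) (c t : ℝ)

theorem rvCdf_mem_Icc [IsProbabilityMeasure P] : rvCdf P X t ∈ Icc 0 1 :=
  ⟨measureReal_nonneg, measureReal_le_one⟩

theorem rvCdf_add_const : rvCdf P (fun ω ↦ X ω + c) t = rvCdf P X (t - c) := by
  simp only [rvCdf, le_sub_iff_add_le]

theorem rvCdf_sub_const : rvCdf P (fun ω ↦ X ω - c) t = rvCdf P X (t + c) := by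
  simp only [rvCdf, sub_le_iff_le_add]

end rvCdf

theorem expectation_bounds_levyGauge_general {Ω₁ Ω₂ : Type*} [MeasurableSpace Ω₁] [MeasurableSpace Ω₂]
    (P₁ : Measure Ω₁) (P₂ : Measure Ω₂)
    [IsProbabilityMeasure P₁] [IsProbabilityMeasure P₂]
    (X : Ω₁ → ℝ) (Y : Ω₂ → ℝ) (hX : Measurable X) (hY : Measurable Y)
    (M₁ M₂ : ℝ)
    (f : ℝ → ℝ) (hf : Monotone f) (hrange : ∀ x : ℝ, f x ∈ Set.Icc M₁ M₂)
    (δ : ℝ) (hδ : 0 ≤ δ) :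
    ((∫ ω, f (Y ω - δ) ∂P₂) - (M₂ - M₁) * levyGauge δ (rvCdf P₁ X) (rvCdf P₂ Y) ≤
        ∫ ω, f (X ω) ∂P₁) ∧
    ((∫ ω, f (X ω) ∂P₁) ≤
        (∫ ω, f (Y ω + δ) ∂P₂) + (M₂ - M₁) * levyGauge δ (rvCdf P₁ X) (rvCdf P₂ Y)) ∧
    (∀ C : NNReal, LipschitzWith C f →
      |(∫ ω, f (X ω) ∂P₁) - ∫ ω, f (Y ω) ∂P₂| ≤
        (C : ℝ) * δ + (M₂ - M₁) * levyGauge δ (rvCdf P₁ X) (rvCdf P₂ Y)) := by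
  set L := levyGauge δ (rvCdf P₁ X) (rvCdf P₂ Y)
  obtain ⟨hL0, hL⟩ : 0 ≤ L ∧ _ :=
    levyGauge_spec_of_mem_Icc (rvCdf_mem_Icc P₁ X ·) (rvCdf_mem_Icc P₂ Y ·)
  have hupper : ∫ ω, f (X ω) ∂P₁ ≤ ∫ ω, f (Y ω + δ) ∂P₂ + (M₂ - M₁) * L :=
    integral_comp_le_integral_comp_add_of_forall_rvCdf_le hX (hY.add_const δ) hL0
      (fun t ↦ by simpa [rvCdf_add_const] using (hL (t - δ)).2) hf hrange
  have hlower : ∫ ω, f (Y ω - δ) ∂P₂ ≤ ∫ ω, f (X ω) ∂P₁ + (M₂ - M₁) * L :=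
    integral_comp_le_integral_comp_add_of_forall_rvCdf_le (hY.sub_const δ) hX hL0
      (fun t ↦ by linarith [rvCdf_sub_const P₂ Y δ t, add_sub_cancel_right t δ ▸ (hL (t + δ)).1])
      hf hrange
  refine ⟨by linarith, hupper, fun C hC ↦ ?_⟩
  have hint : Integrable (fun ω ↦ f (Y ω)) P₂ :=
    .of_mem_Icc M₁ M₂ (hf.measurable.comp hY).aemeasurable (ae_of_all _ fun ω ↦ hrange (Y ω))
  have hplus := abs_integral_comp_add_sub_integral_comp_le hC hY hint δ
  have hminus := abs_integral_comp_add_sub_integral_comp_le hC hY hint (-δ)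
  simp only [← sub_eq_add_neg, abs_neg, abs_of_nonneg hδ] at hplus hminus
  rw [abs_le] at hplus hminus ⊢
  constructor <;> linarith [hplus.1, hplus.2, hminus.1, hminus.2]

/-- Expectation bounds via the Lévy gauge for a nondecreasing function `f : ℝ → [M₁, M₂]`,
together with the Lipschitz refinement. -/
theorem expectation_bounds_levyGauge {Ω₁ Ω₂ : Type*} [MeasurableSpace Ω₁] [MeasurableSpace Ω₂]
    (P₁ : Measure Ω₁) (P₂ : Measure Ω₂)
    [IsProbabilityMeasure P₁] [IsProbabilityMeasure P₂]
    (X : Ω₁ → ℝ) (Y : Ω₂ → ℝ) (hX : Measurable X) (hY : Measurable Y)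
    (M₁ M₂ : ℝ) (hM : M₁ ≤ M₂)
    (f : ℝ → ℝ) (hf : Monotone f) (hrange : ∀ x : ℝ, f x ∈ Set.Icc M₁ M₂)
    (δ : ℝ) (hδ : 0 ≤ δ) :
    ((∫ ω, f (Y ω - δ) ∂P₂) - (M₂ - M₁) * levyGauge δ (rvCdf P₁ X) (rvCdf P₂ Y) ≤
        ∫ ω, f (X ω) ∂P₁) ∧
    ((∫ ω, f (X ω) ∂P₁) ≤
        (∫ ω, f (Y ω + δ) ∂P₂) + (M₂ - M₁) * levyGauge δ (rvCdf P₁ X) (rvCdf P₂ Y)) ∧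
    (∀ C : NNReal, LipschitzWith C f →
      |(∫ ω, f (X ω) ∂P₁) - ∫ ω, f (Y ω) ∂P₂| ≤
        (C : ℝ) * δ + (M₂ - M₁) * levyGauge δ (rvCdf P₁ X) (rvCdf P₂ Y)) :=
  expectation_bounds_levyGauge_general P₁ P₂ X Y hX hY M₁ M₂ f hf hrange δ hδ
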